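/- arXiv:1102.5109 — 2 statements merged into one kernel-verified Lean document; each statement's English description precedes it below -/
import Mathlib

section
/- If a and b are odd positive integers with a + b = 2^n for some natural number n, then the Stern polynomials B_a(t) and B_b(t) are coprime in ℤ[t], i.e. gcd(B_a(t), B_b(t)) = 1. -/
open Polynomial

/-- The Stern polynomials: `B 0 = 0`, `B 1 = 1`, `B (2n) = t * B n`,
`B (2n+1) = B n + B (n+1)`. -/
noncomputable def stern : ℕ → Polynomial ℤ
  | 0 => 0
  | 1 => 1
  | n + 2 =>
    if _h : n % 2 = 0 then
      X * stern (n / 2 + 1)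
    else
      stern (n / 2 + 1) + stern (n / 2 + 2)
  decreasing_by all_goals omega

lemma stern_even (n : ℕ) : stern (2 * n) = X * stern n := by
  match n with
  | 0 => simp [stern]
  | n + 1 =>
    show stern (2*n + 2) = _
    rw [stern]
    simp

lemma stern_odd (n : ℕ) : stern (2 * n + 1) = stern n + stern (n + 1) := by
  match n with
  | 0 => simp [stern]
  | n + 1 =>
    show stern ((2*n + 1) + 2) = _
    rw [stern]
    have h1 : (2*n+1) % 2 = 1 := by omega
    have h2 : (2*n+1)/2 = n := by omega
    simp [h1, h2]

lemma stern_eval0_even (n : ℕ) (h : Even n) : (stern n).eval 0 = 0 := by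
  obtain ⟨m, rfl⟩ := h
  rw [show m + m = 2 * m from by ring, stern_even]
  simp

lemma stern_eval0_odd (n : ℕ) (h : Odd n) : (stern n).eval 0 = 1 := by
  induction n using Nat.strong_induction_on with
  | _ n ih =>
    obtain ⟨m, rfl⟩ := h
    match m with
    | 0 => simp [stern]
    | m + 1 =>
      rw [stern_odd]
      rcases Nat.even_or_odd (m+1) with he | ho
      · rw [eval_add, stern_eval0_even _ he,
          ih (m+2) (by omega) (by rcases he with ⟨j, hj⟩; exact ⟨j, by omega⟩)]
        ring
      · rw [eval_add, ih (m+1) (by omega) ho, stern_eval0_even (m+2)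
          (by rcases ho with ⟨j, hj⟩; exact ⟨j+1, by omega⟩)]
        ring

lemma stern_key (s : ℕ) : ∀ x y : ℕ, x + y + 1 = 2 ^ s →
    ∃ e : ℕ, stern (x+1) * stern (y+1) - stern x * stern y = X ^ e := by
  induction s with
  | zero =>
    intro x y h
    have hx : x = 0 := by omega
    have hy : y = 0 := by omega
    subst hx; subst hy
    exact ⟨0, by simp [stern]⟩
  | succ s ih =>
    have main : ∀ x y : ℕ, Even x → x + y + 1 = 2 ^ (s+1) →
        ∃ e : ℕ, stern (x+1) * stern (y+1) - stern x * stern y = X ^ e := by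
      intro x y hx h
      obtain ⟨p, rfl⟩ := hx
      have hyodd : ∃ q, y = 2 * q + 1 := by
        have : (p + p + y + 1) % 2 = 0 := by rw [h]; simp [Nat.pow_succ, Nat.mul_mod]
        exact ⟨y / 2, by omega⟩
      obtain ⟨q, rfl⟩ := hyodd
      obtain ⟨e, he⟩ := ih p q (by rw [pow_succ] at h; omega)
      refine ⟨e + 1, ?_⟩
      rw [show p + p + 1 = 2*p+1 from by ring, show 2*q+1+1 = 2*(q+1) from by ring,
        show p + p = 2*p from by ring, stern_odd p, stern_even (q+1), stern_even p,
        stern_odd q, pow_succ]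
      linear_combination X * he
    intro x y h
    rcases Nat.even_or_odd x with hx | hx
    · exact main x y hx h
    · obtain ⟨e, he⟩ := main y x
        (by rcases hx with ⟨j, hj⟩; exact ⟨(x + y) / 2 - j, by omega⟩) (by omega)
      exact ⟨e, by rw [← he]; ring⟩

lemma unit_of_dvd_X_pow (d : Polynomial ℤ) (e : ℕ) (h : d ∣ X ^ e)
    (h0 : IsUnit (d.eval 0)) : IsUnit d := by
  have hc : d.coeff 0 = d.eval 0 := Polynomial.coeff_zero_eq_eval_zero d
  have hsq : d.eval 0 * d.eval 0 = 1 := by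
    rcases Int.isUnit_iff.mp h0 with h1 | h1 <;> rw [h1] <;> ring
  have hcop : IsCoprime d (X : Polynomial ℤ) := by
    refine ⟨C (d.eval 0), - C (d.eval 0) * d.divX, ?_⟩
    have hd : X * d.divX + C (d.coeff 0) = d := Polynomial.X_mul_divX_add d
    have hCC : C (d.eval 0) * C (d.coeff 0) = 1 := by
      rw [hc, ← C_mul, hsq, C_1]
    linear_combination (-C (d.eval 0)) * hd + hCC
  exact (hcop.pow_right).isUnit_of_dvd' dvd_rfl h

theorem stern_coprime_of_odd_add_eq_pow_two (a b n : ℕ) (ha : Odd a) (hb : Odd b)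
    (hapos : 0 < a) (hbpos : 0 < b) (hab : a + b = 2 ^ n) (d : Polynomial ℤ)
    (hd1 : d ∣ stern a) (hd2 : d ∣ stern b) : IsUnit d := by
  have h0 : IsUnit (d.eval 0) := by
    have : d.eval 0 ∣ (stern a).eval 0 := by
      obtain ⟨c, hc⟩ := hd1; exact ⟨c.eval 0, by rw [hc, eval_mul]⟩
    rw [stern_eval0_odd a ha] at this
    exact isUnit_of_dvd_one this
  obtain ⟨k, rfl⟩ := ha
  obtain ⟨m, rfl⟩ := hb
  match n with
  | 0 => omega
  | 1 =>
    have hk : k = 0 := by omega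
    subst hk
    simp [stern] at hd1
    exact isUnit_of_dvd_one hd1
  | n + 2 =>
    have hkm : k + m + 1 = 2 ^ (n + 1) := by rw [pow_succ] at hab ⊢; omega
    have main : ∀ k m : ℕ, Even k → k + m + 1 = 2 ^ (n+1) →
        d ∣ stern (2*k+1) → d ∣ stern (2*m+1) → IsUnit d := by
      intro k m hk hkm hd1 hd2
      obtain ⟨p, rfl⟩ := hk
      have hmo : ∃ q, m = 2 * q + 1 := by
        have : (p + p + m + 1) % 2 = 0 := by rw [hkm]; simp [Nat.pow_succ, Nat.mul_mod]
        exact ⟨m / 2, by omega⟩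
      obtain ⟨q, rfl⟩ := hmo
      obtain ⟨e, he⟩ := stern_key n p q (by rw [pow_succ] at hkm; omega)
      have hA : stern (2*(p+p)+1) = X * stern p + (stern p + stern (p+1)) := by
        rw [show 2*(p+p)+1 = 2*(2*p)+1 from by ring, stern_odd (2*p), stern_even p,
          stern_odd p]
      have hB : stern (2*(2*q+1)+1) = (stern q + stern (q+1)) + X * stern (q+1) := by
        rw [stern_odd (2*q+1), stern_odd q, show 2*q+1+1 = 2*(q+1) from by ring,
          stern_even (q+1)]
      have hdvd : d ∣ X ^ (e + 1) := by
        have h3 : d ∣ (stern p + stern (p+1)) * stern (2*(2*q+1)+1)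
            - (stern q + stern (q+1)) * stern (2*(p+p)+1) :=
          dvd_sub (hd2.mul_left _) (hd1.mul_left _)
        rw [hA, hB] at h3
        have h4 : (stern p + stern (p+1)) * ((stern q + stern (q+1)) + X * stern (q+1))
            - (stern q + stern (q+1)) * (X * stern p + (stern p + stern (p+1)))
            = X ^ (e+1) := by
          rw [pow_succ]
          linear_combination X * he
        rwa [h4] at h3
      exact unit_of_dvd_X_pow d (e+1) hdvd h0
    rcases Nat.even_or_odd k with hk | hk
    · exact main k m hk hkm hd1 hd2
    · have hm : Even m := by
        rcases hk with ⟨j, hj⟩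
        exact ⟨(k + m) / 2 - j, by omega⟩
      exact main m k hm (by omega) hd2 hd1
end

section
/- Let a be a real number and n ≥ 1 a natural number. If 0 < a ≤ 1, then the minimum of the values B_i(a) over all indices i with 2^{n-1} ≤ i ≤ 2^n equals a^n. If 1 < a ≤ 2, then this minimum equals a^{n-1}. -/
open Polynomial

lemma stern_two_mul (m : ℕ) (hm : 1 ≤ m) : stern (2 * m) = X * stern m := by
  obtain ⟨k, rfl⟩ : ∃ k, m = k + 1 := ⟨m - 1, by omega⟩
  rw [show 2 * (k + 1) = 2 * k + 2 by ring, stern]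
  have h1 : 2 * k % 2 = 0 := by omega
  have h2 : 2 * k / 2 = k := by omega
  rw [dif_pos h1, h2]

lemma stern_two_mul_add_one (m : ℕ) (hm : 1 ≤ m) :
    stern (2 * m + 1) = stern m + stern (m + 1) := by
  obtain ⟨k, rfl⟩ : ∃ k, m = k + 1 := ⟨m - 1, by omega⟩
  rw [show 2 * (k + 1) + 1 = (2 * k + 1) + 2 by ring, stern]
  have h1 : ¬ (2 * k + 1) % 2 = 0 := by omega
  have h2 : (2 * k + 1) / 2 = k := by omega
  rw [dif_neg h1, h2]

lemma stern_pow_two (n : ℕ) : stern (2 ^ n) = X ^ n := by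
  induction n with
  | zero => simp [stern]
  | succ n ih =>
    rw [pow_succ, mul_comm, stern_two_mul _ (Nat.one_le_two_pow), ih, pow_succ, mul_comm]

lemma stern_eval_nonneg (a : ℝ) (ha : 0 ≤ a) (i : ℕ) : 0 ≤ aeval a (stern i) := by
  induction i using Nat.strong_induction_on with
  | _ i ih =>
    match i with
    | 0 => simp [stern]
    | 1 => simp [stern]
    | (j + 2) =>
      rcases Nat.even_or_odd (j + 2) with ⟨m, hm⟩ | ⟨m, hm⟩
      · rw [show j + 2 = 2 * m by omega, stern_two_mul m (by omega)]
        simp only [map_mul, aeval_X]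
        exact mul_nonneg ha (ih m (by omega))
      · rw [show j + 2 = 2 * m + 1 by omega, stern_two_mul_add_one m (by omega)]
        simp only [map_add]
        exact add_nonneg (ih m (by omega)) (ih (m + 1) (by omega))

lemma stern_lb_le_one (a : ℝ) (ha0 : 0 < a) (ha1 : a ≤ 1) :
    ∀ n i, 2 ^ n ≤ i → i ≤ 2 ^ (n + 1) → a ^ (n + 1) ≤ aeval a (stern i) := by
  intro n
  induction n with
  | zero =>
    intro i h1 h2
    interval_cases i
    · simpa [stern] using ha1
    · rw [show (2:ℕ) = 2 * 1 by ring, stern_two_mul 1 le_rfl]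
      simp [stern]
  | succ n ih =>
    intro i h1 h2
    have e0 : 1 ≤ (2:ℕ) ^ n := Nat.one_le_two_pow
    have e1 : (2:ℕ) ^ (n + 1) = 2 * 2 ^ n := by ring
    have e2 : (2:ℕ) ^ (n + 2) = 2 * 2 ^ (n + 1) := by ring
    rcases Nat.even_or_odd i with ⟨m, hm⟩ | ⟨m, hm⟩
    · rw [show i = 2 * m by omega, stern_two_mul m (by omega)]
      simp only [map_mul, aeval_X]
      have := ih m (by omega) (by omega)
      calc a ^ (n + 2) = a * a ^ (n + 1) := by ring
        _ ≤ a * aeval a (stern m) := by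
            exact mul_le_mul_of_nonneg_left this ha0.le
    · rw [show i = 2 * m + 1 by omega, stern_two_mul_add_one m (by omega)]
      simp only [map_add]
      have hm1 : 2 ^ n ≤ m := by omega
      have hm2 : m ≤ 2 ^ (n + 1) := by omega
      have h3 := ih m hm1 hm2
      have h4 := stern_eval_nonneg a ha0.le (m + 1)
      have h5 : a ^ (n + 2) ≤ a ^ (n + 1) :=
        pow_le_pow_of_le_one ha0.le ha1 (by omega)
      linarith
  
lemma stern_lb_gt_one (a : ℝ) (ha0 : 1 < a) (ha2 : a ≤ 2) :
    ∀ n i, 2 ^ n ≤ i → i ≤ 2 ^ (n + 1) → a ^ n ≤ aeval a (stern i) := by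
  have hapos : (0:ℝ) < a := by linarith
  intro n
  induction n with
  | zero =>
    intro i h1 h2
    interval_cases i
    · simp [stern]
    · rw [show (2:ℕ) = 2 * 1 by ring, stern_two_mul 1 le_rfl]
      simp [stern]
      linarith
  | succ n ih =>
    intro i h1 h2
    have e0 : 1 ≤ (2:ℕ) ^ n := Nat.one_le_two_pow
    have e1 : (2:ℕ) ^ (n + 1) = 2 * 2 ^ n := by ring
    have e2 : (2:ℕ) ^ (n + 2) = 2 * 2 ^ (n + 1) := by ring
    rcases Nat.even_or_odd i with ⟨m, hm⟩ | ⟨m, hm⟩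
    · rw [show i = 2 * m by omega, stern_two_mul m (by omega)]
      simp only [map_mul, aeval_X]
      have := ih m (by omega) (by omega)
      calc a ^ (n + 1) = a * a ^ n := by ring
        _ ≤ a * aeval a (stern m) := mul_le_mul_of_nonneg_left this hapos.le
    · rw [show i = 2 * m + 1 by omega, stern_two_mul_add_one m (by omega)]
      simp only [map_add]
      have hodd : i % 2 = 1 := by omega
      have hlt : i < 2 ^ (n + 2) := by
        rcases Nat.lt_or_ge i (2 ^ (n + 2)) with h | h
        · exact h
        · exfalso; have : i = 2 ^ (n + 2) := le_antisymm h2 h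
          omega
      have hm1 : 2 ^ n ≤ m := by omega
      have hm2 : m ≤ 2 ^ (n + 1) := by omega
      have hm3 : m + 1 ≤ 2 ^ (n + 1) := by omega
      have h3 := ih m hm1 hm2
      have h4 := ih (m + 1) (by omega) hm3
      have hp : (0:ℝ) ≤ a ^ n := by positivity
      have : a * a ^ n ≤ 2 * a ^ n := mul_le_mul_of_nonneg_right ha2 hp
      calc a ^ (n + 1) = a * a ^ n := by ring
        _ ≤ 2 * a ^ n := this
        _ ≤ aeval a (stern m) + aeval a (stern (m + 1)) := by linarith

theorem stern_min_on_dyadic_interval (a : ℝ) (n : ℕ) (hn : 1 ≤ n) :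
    (0 < a → a ≤ 1 →
      IsLeast {y : ℝ | ∃ i : ℕ, 2 ^ (n - 1) ≤ i ∧ i ≤ 2 ^ n ∧
        y = Polynomial.aeval a (stern i)} (a ^ n)) ∧
    (1 < a → a ≤ 2 →
      IsLeast {y : ℝ | ∃ i : ℕ, 2 ^ (n - 1) ≤ i ∧ i ≤ 2 ^ n ∧
        y = Polynomial.aeval a (stern i)} (a ^ (n - 1))) := by
  obtain ⟨k, rfl⟩ : ∃ k, n = k + 1 := ⟨n - 1, by omega⟩
  simp only [Nat.add_sub_cancel]
  constructor
  · intro ha0 ha1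
    constructor
    · refine ⟨2 ^ (k + 1), Nat.pow_le_pow_right (by norm_num) (by omega), le_rfl, ?_⟩
      rw [stern_pow_two]
      simp
    · rintro y ⟨i, h1, h2, rfl⟩
      exact stern_lb_le_one a ha0 ha1 k i h1 h2
  · intro ha1 ha2
    constructor
    · refine ⟨2 ^ k, le_rfl, Nat.pow_le_pow_right (by norm_num) (by omega), ?_⟩
      rw [stern_pow_two]
      simp
    · rintro y ⟨i, h1, h2, rfl⟩
      exact stern_lb_gt_one a ha1 ha2 k i h1 h2
end
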